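/- Let Y be a metric space, Z a normed linear space, h : Y → Z a continuous function and ε > 0. Then there exists a locally Lipschitz function f : Y → Z such that ‖f(y) − h(y)‖ ≤ ε for every y ∈ Y. Moreover, for every y ∈ Y, f(y) lies in the closed convex hull of the image h(Y); in particular, if h is bounded then f is bounded. -/

import Mathlib

/-! Metric spaces are paracompact, so the cover by the open sets `h ⁻¹' ball (h c) ε` admits a
partition of unity `ρ` whose functions are locally Lipschitz: normalise the distance functions
to the complements of a locally finite refinement. Then `f y = ∑ᶠ c, ρ c y • h c` is locally
Lipschitz, and it is a convex combination of points `h c` with `‖h c - h y‖ < ε`. -/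

open Set Function Filter Topology Metric

namespace LocallyLipschitz

variable {α : Type*} [PseudoEMetricSpace α]

theorem of_forall_eventuallyEq {β : Type*} [PseudoEMetricSpace β] {f : α → β}
    (h : ∀ x, ∃ g : α → β, LocallyLipschitz g ∧ f =ᶠ[𝓝 x] g) :
    LocallyLipschitz f := by
  intro x
  obtain ⟨g, hg, hfg⟩ := h x
  obtain ⟨K, t, ht, hK⟩ := hg x
  refine ⟨K, t ∩ {y | f y = g y}, inter_mem ht hfg, fun p hp q hq => ?_⟩
  rw [hp.2, hq.2]
  exact hK hp.1 hq.1

variable {E : Type*} [SeminormedAddCommGroup E]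

theorem finset_sum {ι : Type*} {f : ι → α → E} (s : Finset ι)
    (hf : ∀ i ∈ s, LocallyLipschitz (f i)) : LocallyLipschitz fun x => ∑ i ∈ s, f i x := by
  classical
  induction s using Finset.induction_on with
  | empty => simpa using LocallyLipschitz.const (0 : E)
  | insert i s hi ih =>
    simp only [Finset.sum_insert hi]
    exact (hf i (s.mem_insert_self i)).add (ih fun j hj => hf j (Finset.mem_insert_of_mem hj))

theorem finsum {ι : Type*} {f : ι → α → E} (hf : ∀ i, LocallyLipschitz (f i))
    (hfin : LocallyFinite fun i => support (f i)) : LocallyLipschitz fun x => ∑ᶠ i, f i x :=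
  of_forall_eventuallyEq fun x => by
    obtain ⟨s, hs⟩ := finsum_eventually_eq_sum hfin x
    exact ⟨_, finset_sum s fun i _ => hf i, hs⟩

variable {𝕜 : Type*} [RCLike 𝕜]

theorem smul {F : Type*} [NormedAddCommGroup F] [NormedSpace 𝕜 F] {c : α → 𝕜} {f : α → F}
    (hc : LocallyLipschitz c) (hf : LocallyLipschitz f) : LocallyLipschitz fun x => c x • f x :=
  (contDiff_smul (𝕜 := 𝕜) (F := F) (n := 1)).locallyLipschitz.comp
    (hc.prodMk hf)

theorem inv₀ {c : α → 𝕜} (hc : LocallyLipschitz c) (h0 : ∀ x, c x ≠ 0) :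
    LocallyLipschitz fun x => (c x)⁻¹ := by
  intro x
  obtain ⟨K, t, ht, hK⟩ := (contDiffAt_inv 𝕜 (n := 1) (h0 x)).exists_lipschitzOnWith
  obtain ⟨L, u, hu, hL⟩ := hc x
  exact ⟨K * L, u ∩ c ⁻¹' t, inter_mem hu (hc.continuous.continuousAt ht),
    hK.comp (hL.mono inter_subset_left) fun y hy => hy.2⟩

end LocallyLipschitz

theorem IsOpen.exists_lipschitzWith_support_eq {X : Type*} [PseudoMetricSpace X] {U : Set X}
    (hU : IsOpen U) : ∃ φ : X → ℝ, LipschitzWith 1 φ ∧ 0 ≤ φ ∧ support φ = U := by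
  -- `infDist x ∅ = 0`, so `U = univ` needs its own bump.
  rcases Uᶜ.eq_empty_or_nonempty with hc | hc
  · refine ⟨fun _ => 1, LipschitzWith.const' 1, fun _ => zero_le_one, ?_⟩
    rw [compl_empty_iff.1 hc]
    exact support_const one_ne_zero
  · refine ⟨fun x => infDist x Uᶜ, lipschitz_infDist_pt _, fun _ => infDist_nonneg, ?_⟩
    ext x
    rw [mem_support, ← infDist_nonneg.lt_iff_ne', ← hU.isClosed_compl.notMem_iff_infDist_pos hc,
      mem_compl_iff, not_not]

theorem exists_partitionOfUnity_locallyLipschitz {ι X : Type*} [PseudoMetricSpace X]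
    {U : ι → Set X} (hUo : ∀ i, IsOpen (U i)) (hU : ⋃ i, U i = univ) :
    ∃ ρ : PartitionOfUnity ι X, ρ.IsSubordinate U ∧ ∀ i, LocallyLipschitz (ρ i) := by
  obtain ⟨v, hvo, hvU, hvf, hvu⟩ := precise_refinement U hUo hU
  obtain ⟨w, hwU, hwo, hwv⟩ := exists_subset_iUnion_closure_subset isClosed_univ hvo
    (fun x _ => hvf.point_finite x) hvU.ge
  choose φ hφ_lip hφ_nonneg hφ_supp using fun i => (hwo i).exists_lipschitzWith_support_eq
  have hfin : LocallyFinite fun i => support (φ i) :=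
    hvf.subset fun i => (hφ_supp i).trans_subset (subset_closure.trans (hwv i))
  set s : X → ℝ := fun x => ∑ᶠ i, φ i x
  have hs_pos : ∀ x, 0 < s x := fun x => by
    obtain ⟨i, hi⟩ := mem_iUnion.1 (hwU (mem_univ x))
    refine finsum_pos (fun j => hφ_nonneg j x) ⟨i, ?_⟩ (hfin.point_finite x)
    exact (hφ_nonneg i x).lt_of_ne' ((hφ_supp i).symm ▸ hi : x ∈ support (φ i))
  have hρ_lip : ∀ i, LocallyLipschitz fun x => (s x)⁻¹ * φ i x := fun i =>
    ((LocallyLipschitz.finsum (fun j => (hφ_lip j).locallyLipschitz) hfin).inv₀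
      fun x => (hs_pos x).ne').smul (hφ_lip i).locallyLipschitz
  have hρ_supp : ∀ i, support (fun x => (s x)⁻¹ * φ i x) ⊆ w i := fun i =>
    (support_mul_subset_right _ _).trans (hφ_supp i).subset
  have hρ_sum : ∀ x, ∑ᶠ i, (s x)⁻¹ * φ i x = 1 := fun x => by
    rw [← mul_finsum, inv_mul_cancel₀ (hs_pos x).ne']
  refine ⟨{ toFun := fun i => ⟨_, (hρ_lip i).continuous⟩
            locallyFinite' := hvf.subset fun i => (hρ_supp i).trans (subset_closure.trans (hwv i))
            nonneg' := fun i x => mul_nonneg (inv_nonneg.2 (hs_pos x).le) (hφ_nonneg i x)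
            sum_eq_one' := fun x _ => hρ_sum x
            sum_le_one' := fun x => (hρ_sum x).le }, fun i => ?_, hρ_lip⟩
  exact (closure_mono (hρ_supp i)).trans ((hwv i).trans (hvu i))

/-- A continuous vector-valued function on a metric space can be uniformly
approximated by a locally Lipschitz function whose values lie in the closed
convex hull of the image; in particular boundedness is preserved. -/
theorem exists_locallyLipschitz_approx {Y Z : Type*}
    [MetricSpace Y] [NormedAddCommGroup Z] [NormedSpace ℝ Z]
    (h : Y → Z) (hcont : Continuous h) (ε : ℝ) (hε : 0 < ε) :
    ∃ f : Y → Z, LocallyLipschitz f ∧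
      (∀ y, ‖f y - h y‖ ≤ ε) ∧
      (∀ y, f y ∈ closure (convexHull ℝ (Set.range h))) ∧
      ((∃ M : ℝ, ∀ y, ‖h y‖ ≤ M) → ∃ M : ℝ, ∀ y, ‖f y‖ ≤ M) := by
  obtain ⟨ρ, hρU, hρ_lip⟩ := exists_partitionOfUnity_locallyLipschitz
    (U := fun c => h ⁻¹' ball (h c) ε) (fun c => isOpen_ball.preimage hcont)
    (iUnion_eq_univ_iff.2 fun y => ⟨y, mem_ball_self hε⟩)
  set f : Y → Z := fun y => ∑ᶠ c, ρ c y • h c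
  have hf_mem : ∀ y {t : Set Z}, Convex ℝ t → (∀ c, ρ c y ≠ 0 → h c ∈ t) → f y ∈ t :=
    fun y _ ht hc => ρ.finsum_smul_mem_convex (g := fun c _ => h c) (mem_univ y) hc ht
  have hf_hull : ∀ y, f y ∈ convexHull ℝ (range h) := fun y =>
    hf_mem y (convex_convexHull ℝ _) fun c _ => subset_convexHull ℝ _ (mem_range_self c)
  refine ⟨f, ?_, fun y => ?_, fun y => subset_closure (hf_hull y), ?_⟩
  · exact LocallyLipschitz.finsum (fun c => (hρ_lip c).smul (.const (h c)))
      (ρ.locallyFinite.subset fun c => support_smul_subset_left _ _)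
  · rw [← dist_eq_norm, ← mem_closedBall]
    exact hf_mem y (convex_closedBall _ _) fun c hc =>
      (mem_ball'.1 (hρU c (subset_closure hc))).le
  · rintro ⟨M, hM⟩
    have hsub : convexHull ℝ (range h) ⊆ closedBall 0 M :=
      convexHull_min (range_subset_iff.2 fun c => mem_closedBall_zero_iff.2 (hM c))
        (convex_closedBall 0 M)
    exact ⟨M, fun y => mem_closedBall_zero_iff.1 (hsub (hf_hull y))⟩
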